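/- arXiv:2512.19142 — 6 statements merged into one kernel-verified Lean document; each statement's English description precedes it below -/
import Mathlib

section
/- A set function V on a finite set Y with V(∅) = 0 is submodular (V(A∩B) + V(A∪B) ≤ V(A) + V(B) for all A, B) if and only if its Lovász extension v : ℝ^Y → ℝ is convex. -/
open MeasureTheory Finset

/-- The Lovász extension (Choquet integral) of a set function `V` on a finite set,
defined for arbitrary real-valued `f` by the two-sided layer-cake formula
`v(f) = ∫₀^∞ V({f ≥ t}) dt + ∫_{-∞}^0 (V({f ≥ t}) − V(Y)) dt`. -/
noncomputable def lovasz {Y : Type*} [Fintype Y] (V : Finset Y → ℝ) (f : Y → ℝ) : ℝ :=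
  (∫ t in Set.Ioi (0 : ℝ), V (Finset.univ.filter (fun y => t ≤ f y)))
    + ∫ t in Set.Iio (0 : ℝ), (V (Finset.univ.filter (fun y => t ≤ f y)) - V Finset.univ)

lemma integrable_ioi_step (a d : ℝ) :
    Integrable (fun t => if t ≤ a then d else 0) (volume.restrict (Set.Ioi (0:ℝ))) := by
  have h1 : (fun t : ℝ => if t ≤ a then d else 0) = (Set.Iic a).indicator (fun _ => d) := by
    funext t; simp [Set.indicator_apply]
  rw [h1, MeasureTheory.integrable_indicator_iff measurableSet_Iic]
  refine MeasureTheory.integrableOn_const (ne_of_lt ?_)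
  rw [Measure.restrict_apply measurableSet_Iic]
  have h2 : Set.Iic a ∩ Set.Ioi (0:ℝ) = Set.Ioc 0 a := by ext t; simp [Set.mem_Ioc]; tauto
  rw [h2]
  exact measure_Ioc_lt_top

lemma integrable_iio_step (a d : ℝ) :
    Integrable (fun t => (if t ≤ a then d else 0) - d) (volume.restrict (Set.Iio (0:ℝ))) := by
  have h1 : (fun t : ℝ => (if t ≤ a then d else 0) - d) = (Set.Ioi a).indicator (fun _ => -d) := by
    funext t; by_cases h : t ≤ a <;> simp [Set.indicator_apply, h, lt_iff_not_ge]
  rw [h1, MeasureTheory.integrable_indicator_iff measurableSet_Ioi]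
  refine MeasureTheory.integrableOn_const (ne_of_lt ?_)
  rw [Measure.restrict_apply measurableSet_Ioi]
  have h2 : Set.Ioi a ∩ Set.Iio (0:ℝ) = Set.Ioo a 0 := by ext t; simp [Set.mem_Ioo]
  rw [h2]
  exact measure_Ioo_lt_top

lemma integral_ioi_step (a d : ℝ) :
    ∫ t in Set.Ioi (0:ℝ), (if t ≤ a then d else 0) = d * max a 0 := by
  have h1 : (fun t : ℝ => if t ≤ a then d else 0) = (Set.Iic a).indicator (fun _ => d) := by
    funext t; simp [Set.indicator_apply]
  rw [h1, MeasureTheory.setIntegral_indicator measurableSet_Iic]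
  rw [MeasureTheory.setIntegral_const]
  have h2 : Set.Ioi (0:ℝ) ∩ Set.Iic a = Set.Ioc 0 a := by
    ext t; simp [Set.mem_Ioc]
  rw [h2, Real.volume_real_Ioc]
  rcases le_or_gt a 0 with h | h
  · simp [ENNReal.ofReal_eq_zero.2 (by linarith), max_eq_right h]
  · rw [sub_zero, max_eq_left h.le, smul_eq_mul]
    ring

lemma integral_iio_step (a d : ℝ) :
    ∫ t in Set.Iio (0:ℝ), ((if t ≤ a then d else 0) - d) = -(d * max (-a) 0) := by
  have h1 : (fun t : ℝ => (if t ≤ a then d else 0) - d) = (Set.Ioi a).indicator (fun _ => -d) := by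
    funext t; by_cases h : t ≤ a <;> simp [Set.indicator_apply, h, lt_iff_not_ge] <;> tauto
  rw [h1, MeasureTheory.setIntegral_indicator measurableSet_Ioi, MeasureTheory.setIntegral_const]
  have h2 : Set.Iio (0:ℝ) ∩ Set.Ioi a = Set.Ioo a 0 := by
    ext t; simp [Set.mem_Ioo]; tauto
  rw [h2, Real.volume_real_Ioo]
  rcases le_or_gt 0 a with h | h
  · rw [max_eq_right (by linarith : -a ≤ 0), max_eq_right (by linarith : 0 - a ≤ 0)]
    simp
  · rw [max_eq_left (by linarith : (0:ℝ) ≤ 0 - a), max_eq_left (by linarith : (0:ℝ) ≤ -a), smul_eq_mul]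
    ring

lemma lovasz_eq_sum {Y : Type*} [Fintype Y] [DecidableEq Y] [Inhabited Y]
    (W : Finset Y → ℝ) (hW : W ∅ = 0) (f : Y → ℝ) (l : List Y)
    (hnd : l.Nodup) (hful : ∀ y, y ∈ l)
    (hsort : ∀ i j : ℕ, i ≤ j → j < l.length → f (l.getD j default) ≤ f (l.getD i default)) :
    lovasz W f = ∑ i ∈ Finset.range l.length,
      f (l.getD i default) * (W ((l.take (i+1)).toFinset) - W ((l.take i).toFinset)) := by
  set n := l.length with hn
  set g : ℕ → Y := fun i => l.getD i default with hg
  set T : ℕ → Finset Y := fun k => (l.take k).toFinset with hT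
  set a : ℕ → ℝ := fun i => f (g i) with ha
  set d : ℕ → ℝ := fun i => W (T (i+1)) - W (T i) with hd
  have hT0 : T 0 = ∅ := by simp [hT]
  have hTn : T n = Finset.univ := by
    ext y; simp [hT, hn, List.take_length, List.mem_toFinset, hful y]
  have htel : ∀ m, W (T m) = ∑ i ∈ Finset.range m, d i := by
    intro m
    have h := Finset.sum_range_sub (fun i => W (T i)) m
    rw [hT0, hW] at h
    simp only [hd]
    rw [h]; ring
  have hWu : W Finset.univ = ∑ i ∈ Finset.range n, d i := by rw [← hTn]; exact htel n
  have hmemT : ∀ i, i < n → ∀ k, k ≤ n → (g i ∈ T k ↔ i < k) := by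
    intro i hi k hk
    have hgi : g i = l[i] := List.getD_eq_getElem l default hi
    simp only [hT, List.mem_toFinset, hgi]
    constructor
    · intro h
      obtain ⟨j, hj, hje⟩ := List.mem_iff_getElem.mp h
      have hjlen : j < k ∧ j < n := by
        have := hj; rw [List.length_take] at this; omega
      have : l[j]'(hjlen.2) = l[i] := by rw [← List.getElem_take (xs := l) (h := hj)]; exact hje
      have hji : j = i := hnd.getElem_inj_iff.mp this
      omega
    · intro h
      refine List.mem_iff_getElem.mpr ⟨i, ?_, ?_⟩
      · rw [List.length_take]; omega
      · exact List.getElem_take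
  have hsum : ∀ t : ℝ, W (Finset.univ.filter fun y => t ≤ f y)
      = ∑ i ∈ Finset.range n, (if t ≤ a i then d i else 0) := by
    intro t
    set D := (Finset.range n).filter (fun i => t ≤ a i) with hD
    set k := D.card with hk
    have hkn : k ≤ n := by
      rw [hk, hD]
      exact le_trans (Finset.card_filter_le _ _) (by simp)
    have hdown : ∀ j, j ∈ D → ∀ i, i ≤ j → i ∈ D := by
      intro j hj i hij
      rw [hD, Finset.mem_filter, Finset.mem_range] at *
      exact ⟨lt_of_le_of_lt hij hj.1, le_trans hj.2 (hsort i j hij hj.1)⟩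
    have hDr : D = Finset.range k := by
      have hsub : D ⊆ Finset.range k := by
        intro j hj
        rw [Finset.mem_range]
        by_contra hcon
        push_neg at hcon
        have hss : Finset.range (j+1) ⊆ D := by
          intro i hi
          exact hdown j hj i (Nat.lt_succ_iff.mp (Finset.mem_range.mp hi))
        have := Finset.card_le_card hss
        simp only [Finset.card_range] at this
        omega
      exact Finset.eq_of_subset_of_card_le hsub (by simp [hk])
    have hFT : Finset.univ.filter (fun y => t ≤ f y) = T k := by
      ext y
      obtain ⟨i, hi, hgi⟩ := List.mem_iff_getElem.mp (hful y)
      have hgy : g i = y := by simp only [hg]; rw [List.getD_eq_getElem l default hi]; exact hgi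
      simp only [Finset.mem_filter, Finset.mem_univ, true_and]
      rw [← hgy]
      have h1 : (t ≤ f (g i)) ↔ i ∈ D := by simp [hD, hi, ha, hn]
      rw [h1, hDr, Finset.mem_range, ← hmemT i hi k hkn]
    rw [hFT, htel k, ← Finset.sum_filter, ← hD, hDr]
  rw [lovasz]
  have hIoi : (∫ t in Set.Ioi (0:ℝ), W (Finset.univ.filter fun y => t ≤ f y))
      = ∑ i ∈ Finset.range n, (d i * max (a i) 0) := by
    simp only [hsum]
    rw [MeasureTheory.integral_finset_sum _ (fun i _ => integrable_ioi_step (a i) (d i))]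
    exact Finset.sum_congr rfl (fun i _ => integral_ioi_step (a i) (d i))
  have hIio : (∫ t in Set.Iio (0:ℝ), (W (Finset.univ.filter fun y => t ≤ f y) - W Finset.univ))
      = ∑ i ∈ Finset.range n, (-(d i * max (-(a i)) 0)) := by
    have heq : ∀ t : ℝ, W (Finset.univ.filter fun y => t ≤ f y) - W Finset.univ
        = ∑ i ∈ Finset.range n, ((if t ≤ a i then d i else 0) - d i) := by
      intro t; rw [hsum t, hWu]; exact (Finset.sum_sub_distrib _ _).symm
    simp only [heq]
    rw [MeasureTheory.integral_finset_sum _ (fun i _ => integrable_iio_step (a i) (d i))]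
    exact Finset.sum_congr rfl (fun i _ => integral_iio_step (a i) (d i))
  rw [hIoi, hIio, ← Finset.sum_add_distrib]
  refine Finset.sum_congr rfl (fun i _ => ?_)
  show d i * max (a i) 0 + -(d i * max (-(a i)) 0) = a i * d i
  rcases le_total (a i) 0 with h | h
  · rw [max_eq_right h, max_eq_left (by linarith)]; ring
  · rw [max_eq_left h, max_eq_right (by linarith)]; ring

set_option linter.unusedSectionVars false

section helpers
variable {Y : Type*} [Fintype Y] [DecidableEq Y] [Inhabited Y]

lemma mem_take_iff (l : List Y) (hnd : l.Nodup) {i k : ℕ} (hi : i < l.length) :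
    l.getD i default ∈ (l.take k).toFinset ↔ i < k := by
  rw [List.getD_eq_getElem l default hi, List.mem_toFinset]
  constructor
  · intro h
    obtain ⟨j, hj, hje⟩ := List.mem_iff_getElem.mp h
    have hjk : j < k ∧ j < l.length := by have := hj; rw [List.length_take] at this; omega
    have : l[j]'(hjk.2) = l[i] := by rw [← List.getElem_take (xs := l) (h := hj)]; exact hje
    have := hnd.getElem_inj_iff.mp this
    omega
  · intro h
    refine List.mem_iff_getElem.mpr ⟨i, by rw [List.length_take]; omega, List.getElem_take⟩

lemma take_succ_toFinset (l : List Y) (hnd : l.Nodup) {k : ℕ} (hk : k < l.length) :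
    (l.take (k+1)).toFinset = insert (l.getD k default) (l.take k).toFinset := by
  rw [List.take_succ]
  have : l[k]? = some (l[k]) := List.getElem?_eq_getElem hk
  rw [this]
  ext y
  simp only [Option.toList_some, List.toFinset_append, Finset.mem_union, List.mem_toFinset,
    List.mem_singleton, Finset.mem_insert, List.getD_eq_getElem l default hk]
  tauto

lemma not_mem_take (l : List Y) (hnd : l.Nodup) {k : ℕ} (hk : k < l.length) :
    l.getD k default ∉ (l.take k).toFinset := by
  rw [mem_take_iff l hnd hk]; omega

lemma sum_index_eq (l : List Y) (hnd : l.Nodup) (hful : ∀ y, y ∈ l) (φ : Y → ℝ) :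
    ∑ i ∈ Finset.range l.length, φ (l.getD i default) = ∑ y, φ y := by
  refine Finset.sum_nbij' (fun i => l.getD i default) (fun y => l.idxOf y) ?_ ?_ ?_ ?_ ?_
  · intro i _; exact Finset.mem_univ _
  · intro y _; exact Finset.mem_range.mpr (List.idxOf_lt_length_iff.mpr (hful y))
  · intro i hi
    show l.idxOf (l.getD i default) = i
    rw [List.getD_eq_getElem l default (Finset.mem_range.mp hi)]
    exact hnd.idxOf_getElem i (Finset.mem_range.mp hi)
  · intro y _
    show l.getD (l.idxOf y) default = y
    rw [List.getD_eq_getElem l default (List.idxOf_lt_length_iff.mpr (hful y))]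
    exact List.getElem_idxOf (List.idxOf_lt_length_iff.mpr (hful y))
  · intro i _; rfl

lemma exists_sorted_list (f : Y → ℝ) :
    ∃ l : List Y, l.Nodup ∧ (∀ y, y ∈ l) ∧
      ∀ i j : ℕ, i ≤ j → j < l.length → f (l.getD j default) ≤ f (l.getD i default) := by
  classical
  set le : Y → Y → Bool := fun a b => decide (f b ≤ f a) with hle
  refine ⟨Finset.univ.toList.mergeSort le, ?_, ?_, ?_⟩
  · exact ((Finset.univ.toList.mergeSort_perm le).nodup_iff).mpr (Finset.nodup_toList _)
  · intro y
    rw [(Finset.univ.toList.mergeSort_perm le).mem_iff]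
    simp [Finset.mem_toList]
  · set l := Finset.univ.toList.mergeSort le with hl
    have hs : List.Pairwise (fun a b => le a b = true) l := by
      refine List.pairwise_mergeSort ?_ ?_ _
      · intro a b c hab hbc; simp only [hle, decide_eq_true_eq] at *; linarith
      · intro a b; simp only [hle, Bool.or_eq_true, decide_eq_true_eq]; exact le_total (f b) (f a)
    intro i j hij hj
    rcases eq_or_lt_of_le hij with rfl | hlt
    · exact le_refl _
    · have hp := List.pairwise_iff_getElem.mp hs i j (lt_trans hlt hj) hj hlt
      rw [List.getD_eq_getElem l default (lt_trans hlt hj), List.getD_eq_getElem l default hj]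
      simpa [hle] using hp

end helpers

section main
variable {Y : Type*} [Fintype Y] [DecidableEq Y] [Inhabited Y]

lemma lovasz_additive (x : Y → ℝ) (f : Y → ℝ) :
    lovasz (fun A => ∑ y ∈ A, x y) f = ∑ y, x y * f y := by
  obtain ⟨l, hnd, hful, hsort⟩ := exists_sorted_list f
  rw [lovasz_eq_sum (fun A => ∑ y ∈ A, x y) (by simp) f l hnd hful hsort]
  rw [← sum_index_eq l hnd hful (fun y => x y * f y)]
  refine Finset.sum_congr rfl (fun i hi => ?_)
  have hi' := Finset.mem_range.mp hi
  rw [take_succ_toFinset l hnd hi', Finset.sum_insert (by simpa using not_mem_take l hnd hi')]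
  ring

lemma lovasz_sub (V W : Finset Y → ℝ) (hV0 : V ∅ = 0) (hW0 : W ∅ = 0) (f : Y → ℝ) :
    lovasz (fun A => V A - W A) f = lovasz V f - lovasz W f := by
  obtain ⟨l, hnd, hful, hsort⟩ := exists_sorted_list f
  rw [lovasz_eq_sum (fun A => V A - W A) (by simp [hV0, hW0]) f l hnd hful hsort,
    lovasz_eq_sum V hV0 f l hnd hful hsort, lovasz_eq_sum W hW0 f l hnd hful hsort,
    ← Finset.sum_sub_distrib]
  exact Finset.sum_congr rfl (fun i _ => by ring)

lemma lovasz_nonneg (U : Finset Y → ℝ) (hU : ∀ A, 0 ≤ U A) (hUu : U Finset.univ = 0)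
    (f : Y → ℝ) : 0 ≤ lovasz U f := by
  rw [lovasz]
  refine add_nonneg ?_ ?_
  · exact MeasureTheory.integral_nonneg (fun t => hU _)
  · refine MeasureTheory.integral_nonneg (fun t => ?_)
    simp only [hUu, sub_zero]
    exact hU _

lemma greedy_feasible (V : Finset Y → ℝ) (hV0 : V ∅ = 0)
    (hsub : ∀ A B : Finset Y, V (A ∩ B) + V (A ∪ B) ≤ V A + V B)
    (l : List Y) (hnd : l.Nodup) (hful : ∀ y, y ∈ l) (A : Finset Y) :
    ∑ y ∈ A, (V ((l.take (l.idxOf y + 1)).toFinset) - V ((l.take (l.idxOf y)).toFinset))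
      ≤ V A := by
  set x : Y → ℝ := fun y =>
    V ((l.take (l.idxOf y + 1)).toFinset) - V ((l.take (l.idxOf y)).toFinset) with hx
  set T : ℕ → Finset Y := fun k => (l.take k).toFinset with hT
  set g : ℕ → Y := fun i => l.getD i default with hg
  have hTuniv : T l.length = Finset.univ := by
    ext y; simp [hT, List.take_length, List.mem_toFinset, hful y]
  have main : ∀ k, ∑ y ∈ A ∩ T k, x y ≤ V (A ∩ T k) := by
    intro k
    induction k with
    | zero => simp [hT, hV0]
    | succ k ih =>
      rcases le_or_gt l.length k with hk | hk
      · have h1 : T (k+1) = T k := by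
          simp only [hT]
          rw [List.take_of_length_le hk, List.take_of_length_le (by omega)]
        rw [h1]; exact ih
      · have hTk : T (k+1) = insert (g k) (T k) := take_succ_toFinset l hnd hk
        have hnm : g k ∉ T k := not_mem_take l hnd hk
        have hidx : l.idxOf (g k) = k := by
          simp only [hg]
          rw [List.getD_eq_getElem l default hk]
          exact hnd.idxOf_getElem k hk
        by_cases hA : g k ∈ A
        · have hAi : A ∩ T (k+1) = insert (g k) (A ∩ T k) := by
            rw [hTk]; ext z
            simp only [Finset.mem_inter, Finset.mem_insert]
            constructor
            · rintro ⟨hz1, hz2 | hz2⟩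
              · left; exact hz2 ▸ rfl
              · right; exact ⟨hz1, hz2⟩
            · rintro (rfl | ⟨hz1, hz2⟩)
              · exact ⟨hA, Or.inl rfl⟩
              · exact ⟨hz1, Or.inr hz2⟩
          have hnm2 : g k ∉ A ∩ T k := by simp [hnm]
          rw [hAi, Finset.sum_insert hnm2]
          have hxk : x (g k) = V (T (k+1)) - V (T k) := by
            simp only [hx, hidx, hT]
          have hsubm := hsub (insert (g k) (A ∩ T k)) (T k)
          have hint : insert (g k) (A ∩ T k) ∩ T k = A ∩ T k := by
            ext z
            simp only [Finset.mem_inter, Finset.mem_insert]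
            constructor
            · rintro ⟨rfl | ⟨hz1, hz2⟩, hz3⟩
              · exact absurd hz3 hnm
              · exact ⟨hz1, hz2⟩
            · rintro ⟨hz1, hz2⟩; exact ⟨Or.inr ⟨hz1, hz2⟩, hz2⟩
          have huni : insert (g k) (A ∩ T k) ∪ T k = T (k+1) := by
            rw [hTk]; ext z
            simp only [Finset.mem_union, Finset.mem_insert, Finset.mem_inter]
            tauto
          rw [hint, huni, ← hAi] at hsubm
          rw [← hAi]
          linarith [ih, hxk]
        · have hAi : A ∩ T (k+1) = A ∩ T k := by
            rw [hTk]; ext z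
            simp only [Finset.mem_inter, Finset.mem_insert]
            constructor
            · rintro ⟨hz1, rfl | hz2⟩
              · exact absurd hz1 hA
              · exact ⟨hz1, hz2⟩
            · rintro ⟨hz1, hz2⟩; exact ⟨hz1, Or.inr hz2⟩
          rw [hAi]; exact ih
  have := main l.length
  rwa [hTuniv, Finset.inter_univ] at this

lemma lovasz_two_step (V : Finset Y → ℝ) (hV0 : V ∅ = 0) (A B : Finset Y) (hAB : A ⊆ B)
    (c₁ c₂ : ℝ) (h12 : c₂ ≤ c₁) (h20 : 0 ≤ c₂) :
    lovasz V (fun y => if y ∈ A then c₁ else if y ∈ B then c₂ else 0)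
      = c₁ * V A + c₂ * (V B - V A) := by
  classical
  set f : Y → ℝ := fun y => if y ∈ A then c₁ else if y ∈ B then c₂ else 0 with hf
  set l : List Y := (A.toList ++ (B \ A).toList) ++ Bᶜ.toList with hl
  have hcard : A.card ≤ B.card := Finset.card_le_card hAB
  have hlen1 : (A.toList ++ (B \ A).toList).length = B.card := by
    rw [List.length_append, Finset.length_toList, Finset.length_toList,
      Finset.card_sdiff_of_subset hAB]
    omega
  have hlenA : A.toList.length = A.card := Finset.length_toList A
  have hBn : B.card ≤ l.length := by
    rw [hl, List.length_append, hlen1]; omega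
  have hnd : l.Nodup := by
    refine List.Nodup.append (List.Nodup.append (Finset.nodup_toList _)
      (Finset.nodup_toList _) ?_) (Finset.nodup_toList _) ?_
    · intro a ha hb
      rw [Finset.mem_toList] at ha hb
      exact (Finset.mem_sdiff.mp hb).2 ha
    · intro a ha hb
      rw [List.mem_append, Finset.mem_toList, Finset.mem_toList] at ha
      rw [Finset.mem_toList, Finset.mem_compl] at hb
      rcases ha with ha | ha
      · exact hb (hAB ha)
      · exact hb (Finset.mem_sdiff.mp ha).1
  have hful : ∀ y, y ∈ l := by
    intro y
    rw [hl, List.mem_append, List.mem_append, Finset.mem_toList, Finset.mem_toList,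
      Finset.mem_toList, Finset.mem_compl, Finset.mem_sdiff]
    by_cases hyB : y ∈ B
    · by_cases hyA : y ∈ A
      · exact Or.inl (Or.inl hyA)
      · exact Or.inl (Or.inr ⟨hyB, hyA⟩)
    · exact Or.inr hyB
  have hTA : (l.take A.card).toFinset = A := by
    rw [hl, List.append_assoc, ← hlenA, List.take_left]
    exact Finset.toList_toFinset A
  have hTB : (l.take B.card).toFinset = B := by
    rw [hl, ← hlen1, List.take_left, List.toFinset_append,
      Finset.toList_toFinset, Finset.toList_toFinset]
    exact Finset.union_sdiff_of_subset hAB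
  have hmemA : ∀ i, i < l.length → (l.getD i default ∈ A ↔ i < A.card) := by
    intro i hi; conv_lhs => rw [← hTA]
    exact mem_take_iff l hnd hi
  have hmemB : ∀ i, i < l.length → (l.getD i default ∈ B ↔ i < B.card) := by
    intro i hi; conv_lhs => rw [← hTB]
    exact mem_take_iff l hnd hi
  have hval : ∀ i, i < l.length →
      f (l.getD i default) = if i < A.card then c₁ else if i < B.card then c₂ else 0 := by
    intro i hi
    simp only [hf]
    by_cases h1 : i < A.card
    · rw [if_pos ((hmemA i hi).mpr h1), if_pos h1]
    · rw [if_neg (fun h => h1 ((hmemA i hi).mp h)), if_neg h1]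
      by_cases h2 : i < B.card
      · rw [if_pos ((hmemB i hi).mpr h2), if_pos h2]
      · rw [if_neg (fun h => h2 ((hmemB i hi).mp h)), if_neg h2]
  have hsort : ∀ i j : ℕ, i ≤ j → j < l.length →
      f (l.getD j default) ≤ f (l.getD i default) := by
    intro i j hij hj
    rw [hval j hj, hval i (lt_of_le_of_lt hij hj)]
    split_ifs <;> try linarith
    all_goals (exfalso; omega)
  rw [lovasz_eq_sum V hV0 f l hnd hful hsort]
  set d : ℕ → ℝ := fun i => V ((l.take (i+1)).toFinset) - V ((l.take i).toFinset) with hd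
  have tel : ∀ m k : ℕ, m ≤ k →
      ∑ i ∈ Finset.Ico m k, d i = V ((l.take k).toFinset) - V ((l.take m).toFinset) := by
    intro m k hmk
    rw [Finset.sum_Ico_eq_sub _ hmk, Finset.sum_range_sub (fun i => V ((l.take i).toFinset)),
      Finset.sum_range_sub (fun i => V ((l.take i).toFinset))]
    ring
  have hT0 : (l.take 0).toFinset = (∅ : Finset Y) := by simp
  have hsplit : ∑ i ∈ Finset.range l.length, f (l.getD i default) * d i
      = (∑ i ∈ Finset.Ico 0 A.card, f (l.getD i default) * d i
        + ∑ i ∈ Finset.Ico A.card B.card, f (l.getD i default) * d i)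
        + ∑ i ∈ Finset.Ico B.card l.length, f (l.getD i default) * d i := by
    rw [Finset.range_eq_Ico, ← Finset.sum_Ico_consecutive _ (Nat.zero_le B.card) hBn,
      ← Finset.sum_Ico_consecutive _ (Nat.zero_le A.card) hcard]
  rw [hsplit]
  have e1 : ∑ i ∈ Finset.Ico 0 A.card, f (l.getD i default) * d i = c₁ * V A := by
    have hc : ∀ i ∈ Finset.Ico 0 A.card, f (l.getD i default) * d i = c₁ * d i := by
      intro i hi
      rw [Finset.mem_Ico] at hi
      rw [hval i (by omega), if_pos hi.2]
    rw [Finset.sum_congr rfl hc, ← Finset.mul_sum, tel 0 A.card (Nat.zero_le _), hTA, hT0, hV0]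
    ring
  have e2 : ∑ i ∈ Finset.Ico A.card B.card, f (l.getD i default) * d i
      = c₂ * (V B - V A) := by
    have hc : ∀ i ∈ Finset.Ico A.card B.card, f (l.getD i default) * d i = c₂ * d i := by
      intro i hi
      rw [Finset.mem_Ico] at hi
      rw [hval i (by omega), if_neg (by omega), if_pos hi.2]
    rw [Finset.sum_congr rfl hc, ← Finset.mul_sum, tel A.card B.card hcard, hTA, hTB]
  have e3 : ∑ i ∈ Finset.Ico B.card l.length, f (l.getD i default) * d i = 0 := by
    refine Finset.sum_eq_zero (fun i hi => ?_)
    rw [Finset.mem_Ico] at hi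
    rw [hval i hi.2, if_neg (by omega), if_neg (by omega)]
    ring
  rw [e1, e2, e3]
  ring

end main


/-- A set function `V` with `V ∅ = 0` on a finite set is submodular if and only if
its Lovász extension is convex on `ℝ^Y`. -/
theorem submodular_iff_lovasz_convex (Y : Type*) [Fintype Y] [DecidableEq Y]
    (V : Finset Y → ℝ) (hV0 : V ∅ = 0) :
    (∀ A B : Finset Y, V (A ∩ B) + V (A ∪ B) ≤ V A + V B) ↔
      ConvexOn ℝ Set.univ (lovasz V) := by
  rcases isEmpty_or_nonempty Y with hY | hY
  · have hA : ∀ A : Finset Y, A = ∅ := fun A =>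
      Finset.eq_empty_of_forall_notMem (fun y _ => (IsEmpty.false y).elim)
    have hlz : lovasz V = fun _ => (0:ℝ) := by
      funext f
      rw [lovasz]
      have h1 : ∀ t : ℝ, Finset.univ.filter (fun y => t ≤ f y) = (∅ : Finset Y) :=
        fun t => hA _
      simp only [h1, hA Finset.univ, hV0, sub_self]
      simp [hV0]
    constructor
    · intro _
      rw [hlz]
      exact convexOn_const 0 convex_univ
    · intro _ A B
      rw [hA A, hA B]
      simp [hV0]
  · have : Inhabited Y := Classical.inhabited_of_nonempty hY
    constructor
    · intro hsub
      refine ⟨convex_univ, ?_⟩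
      intro f₁ _ f₂ _ α β hα hβ hαβ
      obtain ⟨l, hnd, hful, hsort⟩ := exists_sorted_list (α • f₁ + β • f₂)
      set x : Y → ℝ := fun y =>
        V ((l.take (l.idxOf y + 1)).toFinset) - V ((l.take (l.idxOf y)).toFinset) with hx
      set W : Finset Y → ℝ := fun A => ∑ y ∈ A, x y with hW
      have hW0 : W ∅ = 0 := by simp [hW]
      have hidx : ∀ i (hi : i < l.length), l.idxOf (l.getD i default) = i := by
        intro i hi
        rw [List.getD_eq_getElem l default hi]
        exact hnd.idxOf_getElem i hi
      have hkey : lovasz V (α • f₁ + β • f₂) = ∑ y, x y * (α • f₁ + β • f₂) y := by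
        rw [lovasz_eq_sum V hV0 _ l hnd hful hsort,
          ← sum_index_eq l hnd hful (fun y => x y * (α • f₁ + β • f₂) y)]
        refine Finset.sum_congr rfl (fun i hi => ?_)
        have hi' := Finset.mem_range.mp hi
        simp only [hx, hidx i hi']
        ring
      have hfeas : ∀ A, W A ≤ V A := fun A => greedy_feasible V hV0 hsub l hnd hful A
      have hWuniv : W Finset.univ = V Finset.univ := by
        show (∑ y, x y) = V Finset.univ
        rw [← sum_index_eq l hnd hful x]
        have hc : ∀ i ∈ Finset.range l.length, x (l.getD i default)
            = V ((l.take (i+1)).toFinset) - V ((l.take i).toFinset) := by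
          intro i hi
          have hi' := Finset.mem_range.mp hi
          simp only [hx, hidx i hi']
        rw [Finset.sum_congr rfl hc, Finset.sum_range_sub (fun i => V ((l.take i).toFinset))]
        have h1 : (l.take l.length).toFinset = Finset.univ := by
          ext y; simp [List.take_length, hful y]
        have h2 : (l.take 0).toFinset = (∅ : Finset Y) := by simp
        rw [h1, h2, hV0, sub_zero]
      have hle : ∀ fg : Y → ℝ, lovasz W fg ≤ lovasz V fg := by
        intro fg
        have h1 : lovasz (fun A => V A - W A) fg = lovasz V fg - lovasz W fg :=
          lovasz_sub V W hV0 hW0 fg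
        have h2 : 0 ≤ lovasz (fun A => V A - W A) fg :=
          lovasz_nonneg _ (fun A => by linarith [hfeas A]) (by rw [hWuniv]; ring) fg
        linarith
      have hWlin : ∀ fg, lovasz W fg = ∑ y, x y * fg y := fun fg => lovasz_additive x fg
      have expand : ∑ y, x y * (α • f₁ + β • f₂) y
          = α * (∑ y, x y * f₁ y) + β * (∑ y, x y * f₂ y) := by
        rw [Finset.mul_sum, Finset.mul_sum, ← Finset.sum_add_distrib]
        refine Finset.sum_congr rfl (fun y _ => ?_)
        simp only [Pi.add_apply, Pi.smul_apply, smul_eq_mul]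
        ring
      calc lovasz V (α • f₁ + β • f₂)
          = α * (∑ y, x y * f₁ y) + β * (∑ y, x y * f₂ y) := by rw [hkey, expand]
        _ = α * lovasz W f₁ + β * lovasz W f₂ := by rw [hWlin f₁, hWlin f₂]
        _ ≤ α * lovasz V f₁ + β * lovasz V f₂ := by
            have g1 := mul_le_mul_of_nonneg_left (hle f₁) hα
            have g2 := mul_le_mul_of_nonneg_left (hle f₂) hβ
            linarith
        _ = α • lovasz V f₁ + β • lovasz V f₂ := by simp [smul_eq_mul]
    · intro hcv A B
      set f₁ : Y → ℝ := fun y => if y ∈ A then (1:ℝ) else 0 with hf₁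
      set f₂ : Y → ℝ := fun y => if y ∈ B then (1:ℝ) else 0 with hf₂
      have h1 : lovasz V f₁ = V A := by
        have he : f₁ = fun y => if y ∈ A then (1:ℝ) else if y ∈ A then 1 else 0 := by
          funext y; by_cases h : y ∈ A <;> simp [hf₁, h]
        rw [he, lovasz_two_step V hV0 A A (subset_refl A) 1 1 le_rfl zero_le_one]
        ring
      have h2 : lovasz V f₂ = V B := by
        have he : f₂ = fun y => if y ∈ B then (1:ℝ) else if y ∈ B then 1 else 0 := by
          funext y; by_cases h : y ∈ B <;> simp [hf₂, h]
        rw [he, lovasz_two_step V hV0 B B (subset_refl B) 1 1 le_rfl zero_le_one]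
        ring
      have h3 : lovasz V ((1/2 : ℝ) • f₁ + (1/2 : ℝ) • f₂)
          = 1 * V (A ∩ B) + (1/2) * (V (A ∪ B) - V (A ∩ B)) := by
        have he : (1/2 : ℝ) • f₁ + (1/2 : ℝ) • f₂
            = fun y => if y ∈ A ∩ B then (1:ℝ) else if y ∈ A ∪ B then (1/2 : ℝ) else 0 := by
          funext y
          simp only [Pi.add_apply, Pi.smul_apply, smul_eq_mul, hf₁, hf₂,
            Finset.mem_inter, Finset.mem_union]
          by_cases hA : y ∈ A <;> by_cases hB : y ∈ B <;> simp [hA, hB] <;> norm_num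
        rw [he, lovasz_two_step V hV0 (A ∩ B) (A ∪ B) Finset.inter_subset_union
          1 (1/2) (by norm_num) (by norm_num)]
      have hq := hcv.2 (Set.mem_univ f₁) (Set.mem_univ f₂)
        (by norm_num : (0:ℝ) ≤ 1/2) (by norm_num : (0:ℝ) ≤ 1/2) (by norm_num)
      rw [h1, h2, h3, smul_eq_mul, smul_eq_mul] at hq
      linarith
end

section
/- For a submodular set function V on a finite set Y with V(∅) = 0, the minimum of V over all subsets equals the minimum of the Lovász extension v over all functions f : Y → [0,1]: min_{B ⊆ Y} V(B) = min_{f : Y → [0,1]} v(f). -/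
open MeasureTheory Finset

section Aux
variable {Y : Type*} [Fintype Y] [DecidableEq Y] (V : Finset Y → ℝ) (f : Y → ℝ)

lemma level_eq_iInter (S : Finset Y) :
    {t : ℝ | Finset.univ.filter (fun y => t ≤ f y) = S}
      = ⋂ y : Y, (if y ∈ S then Set.Iic (f y) else Set.Ioi (f y)) := by
  ext t
  simp only [Set.mem_setOf_eq, Finset.ext_iff, Finset.mem_filter, Finset.mem_univ, true_and,
    Set.mem_iInter]
  constructor
  · intro h y
    by_cases hy : y ∈ S
    · simp only [hy, if_true, Set.mem_Iic]
      exact (h y).mpr hy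
    · simp only [hy, if_false, Set.mem_Ioi]
      exact lt_of_not_ge fun hle => hy ((h y).mp hle)
  · intro h y
    have := h y
    by_cases hy : y ∈ S
    · simp only [hy, if_true, Set.mem_Iic] at this
      exact ⟨fun _ => hy, fun _ => this⟩
    · simp only [hy, if_false, Set.mem_Ioi] at this
      exact ⟨fun hle => absurd hle (not_le.mpr this), fun hc => absurd hc hy⟩

lemma level_measurable (S : Finset Y) :
    MeasurableSet {t : ℝ | Finset.univ.filter (fun y => t ≤ f y) = S} := by
  rw [level_eq_iInter f S]
  exact MeasurableSet.iInter fun y => by split <;> [exact measurableSet_Iic; exact measurableSet_Ioi]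

lemma g_eq_sum :
    (fun t : ℝ => V (Finset.univ.filter (fun y => t ≤ f y)))
      = fun t => ∑ S : Finset Y,
          Set.indicator {t : ℝ | Finset.univ.filter (fun y => t ≤ f y) = S} (fun _ => V S) t := by
  funext t
  rw [Finset.sum_eq_single (Finset.univ.filter (fun y => t ≤ f y))]
  · simp [Set.indicator_apply]
  · intro S _ hS
    simp [Set.indicator_apply, Ne.symm hS]
  · simp

lemma g_integrableOn_Ioc :
    IntegrableOn (fun t : ℝ => V (Finset.univ.filter (fun y => t ≤ f y))) (Set.Ioc 0 1) := by
  rw [g_eq_sum V f]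
  apply integrable_finset_sum
  intro S _
  exact (integrableOn_const measure_Ioc_lt_top.ne).indicator (level_measurable f S)

lemma g_eq_zero_on_Ioi (hV0 : V ∅ = 0) (hf : ∀ y, f y ∈ Set.Icc (0:ℝ) 1) :
    ∀ t ∈ Set.Ioi (1:ℝ), V (Finset.univ.filter (fun y => t ≤ f y)) = 0 := by
  intro t ht
  have : Finset.univ.filter (fun y => t ≤ f y) = (∅ : Finset Y) := by
    ext y
    simp only [Finset.mem_filter, Finset.mem_univ, true_and, Finset.notMem_empty, iff_false]
    exact not_le.mpr (lt_of_le_of_lt (hf y).2 ht)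
  rw [this, hV0]

lemma g_integrableOn_Ioi (hV0 : V ∅ = 0) (hf : ∀ y, f y ∈ Set.Icc (0:ℝ) 1) :
    IntegrableOn (fun t : ℝ => V (Finset.univ.filter (fun y => t ≤ f y))) (Set.Ioi 0) := by
  rw [show Set.Ioi (0:ℝ) = Set.Ioc 0 1 ∪ Set.Ioi 1 from (Set.Ioc_union_Ioi_eq_Ioi zero_le_one).symm]
  refine (g_integrableOn_Ioc V f).union ?_
  apply (integrableOn_congr_fun (g_eq_zero_on_Ioi V f hV0 hf) measurableSet_Ioi).mpr
  exact integrableOn_zero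

lemma snd_zero (hf : ∀ y, f y ∈ Set.Icc (0:ℝ) 1) :
    (∫ t in Set.Iio (0 : ℝ), (V (Finset.univ.filter (fun y => t ≤ f y)) - V Finset.univ)) = 0 := by
  rw [setIntegral_congr_fun measurableSet_Iio (g := fun _ => (0:ℝ))]
  · simp
  · intro t ht
    have : Finset.univ.filter (fun y => t ≤ f y) = (Finset.univ : Finset Y) := by
      ext y
      simp only [Finset.mem_filter, Finset.mem_univ, true_and, iff_true]
      exact le_of_lt (lt_of_lt_of_le ht (hf y).1)
    dsimp only
    rw [this]; ring

lemma lovasz_indicator (hV0 : V ∅ = 0) (B : Finset Y) :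
    lovasz V (fun y => if y ∈ B then (1:ℝ) else 0) = V B := by
  have hf : ∀ y, (if y ∈ B then (1:ℝ) else 0) ∈ Set.Icc (0:ℝ) 1 := by
    intro y; split <;> simp
  unfold lovasz
  rw [snd_zero V _ hf, add_zero]
  rw [setIntegral_congr_fun measurableSet_Ioi
    (g := Set.indicator (Set.Ioc (0:ℝ) 1) (fun _ => V B))]
  · rw [setIntegral_indicator measurableSet_Ioc]
    have : Set.Ioi (0:ℝ) ∩ Set.Ioc 0 1 = Set.Ioc 0 1 := by
      rw [Set.inter_eq_right]; exact Set.Ioc_subset_Ioi_self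
    rw [this, setIntegral_const]
    simp [Real.volume_Ioc]
  · intro t ht
    by_cases h1 : t ≤ 1
    · have hB : Finset.univ.filter (fun y => t ≤ (if y ∈ B then (1:ℝ) else 0)) = B := by
        ext y
        simp only [Finset.mem_filter, Finset.mem_univ, true_and]
        by_cases hy : y ∈ B <;> simp [hy]
        · exact h1
        · exact Set.mem_Ioi.mp ht
      simp [hB, Set.indicator_apply, Set.mem_Ioc, Set.mem_Ioi.mp ht, h1]
    · have := g_eq_zero_on_Ioi V _ hV0 hf t (Set.mem_Ioi.mpr (not_le.mp h1))
      simp [this, Set.indicator_apply, Set.mem_Ioc, h1]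

lemma lovasz_ge (hV0 : V ∅ = 0) (hf : ∀ y, f y ∈ Set.Icc (0:ℝ) 1) :
    (⨅ B : Finset Y, V B) ≤ lovasz V f := by
  have hbdd : BddBelow (Set.range V) := (Set.finite_range V).bddBelow
  set m := ⨅ B : Finset Y, V B with hm
  have hm0 : m ≤ 0 := hV0 ▸ ciInf_le hbdd (∅ : Finset Y)
  unfold lovasz
  rw [snd_zero V f hf, add_zero]
  rw [show Set.Ioi (0:ℝ) = Set.Ioc 0 1 ∪ Set.Ioi 1 from (Set.Ioc_union_Ioi_eq_Ioi zero_le_one).symm]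
  rw [setIntegral_union (Set.Ioc_disjoint_Ioi le_rfl) measurableSet_Ioi
    (g_integrableOn_Ioc V f)
    ((integrableOn_congr_fun (g_eq_zero_on_Ioi V f hV0 hf) measurableSet_Ioi).mpr integrableOn_zero)]
  rw [setIntegral_congr_fun measurableSet_Ioi (g_eq_zero_on_Ioi V f hV0 hf)]
  rw [integral_zero, add_zero]
  calc m = ∫ _t in Set.Ioc (0:ℝ) 1, m := by
            rw [setIntegral_const]; simp [Real.volume_Ioc]
    _ ≤ _ := by
          apply setIntegral_mono_on (integrableOn_const measure_Ioc_lt_top.ne)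
            (g_integrableOn_Ioc V f) measurableSet_Ioc
          intro t _
          exact ciInf_le hbdd _

end Aux

/-- Submodular function minimization: for a submodular `V` with `V ∅ = 0`, the
minimum of `V` over subsets equals the minimum of the Lovász extension over
functions with values in `[0,1]`. -/
theorem submodular_min_eq_lovasz_min (Y : Type*) [Fintype Y] [DecidableEq Y]
    (V : Finset Y → ℝ) (hV0 : V ∅ = 0)
    (hsub : ∀ A B : Finset Y, V (A ∩ B) + V (A ∪ B) ≤ V A + V B) :
    (⨅ B : Finset Y, V B) =
      ⨅ f : {g : Y → ℝ // ∀ y, g y ∈ Set.Icc (0 : ℝ) 1}, lovasz V f.1 := by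
  have hne : Nonempty {g : Y → ℝ // ∀ y, g y ∈ Set.Icc (0 : ℝ) 1} :=
    ⟨⟨fun _ => 0, fun y => by simp⟩⟩
  apply le_antisymm
  · exact le_ciInf fun f => lovasz_ge V f.1 hV0 f.2
  · apply le_ciInf
    intro B
    have hbdd : BddBelow (Set.range fun f : {g : Y → ℝ // ∀ y, g y ∈ Set.Icc (0 : ℝ) 1} =>
        lovasz V f.1) := by
      refine ⟨⨅ B : Finset Y, V B, ?_⟩
      rintro x ⟨f, rfl⟩
      exact lovasz_ge V f.1 hV0 f.2
    calc (⨅ f : {g : Y → ℝ // ∀ y, g y ∈ Set.Icc (0 : ℝ) 1}, lovasz V f.1)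
        ≤ lovasz V (fun y => if y ∈ B then (1:ℝ) else 0) :=
          ciInf_le hbdd ⟨fun y => if y ∈ B then (1:ℝ) else 0,
            fun y => by by_cases h : y ∈ B <;> simp [h]⟩
      _ = V B := lovasz_indicator V hV0 B
end

section
/- Greedy algorithm optimality: let V be submodular on a finite set Y with V(∅) = 0, f : Y → ℝ with distinct values ordered f(y_{σ(1)}) ≥ ... ≥ f(y_{σ(k)}). The measure μ defined by μ({y_{σ(i)}}) = V({y_{σ(1)},...,y_{σ(i)}}) − V({y_{σ(1)},...,y_{σ(i-1)}}) lies in the base polytope B(V) = { μ : μ(Y) = V(Y), μ(A) ≤ V(A) for all A ⊆ Y }. -/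
open Finset

/-!
Order `Y` along the enumeration, so that `μ (e i)` is the marginal gain of `e i` over the prefix
before it. For an arbitrary `A` with last element `a`, submodularity applied to `A` and the prefix
strictly below `a` shows that the gain of `a` over that prefix is at most its gain over the rest of
`A`; summing over `A` by induction on its largest element gives `μ(A) ≤ V(A)`, and when `A` is a
prefix every step is an equality, which telescopes to `μ(Y) = V(Y)`.
-/

def IsSubmodular {α β : Type*} [DecidableEq α] [Add β] [LE β] (V : Finset α → β) : Prop :=
  ∀ A B : Finset α, V (A ∩ B) + V (A ∪ B) ≤ V A + V B

theorem IsSubmodular.comp_image {α γ β : Type*} [DecidableEq α] [DecidableEq γ] [Add β]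
    [LE β] {V : Finset γ → β} (hV : IsSubmodular V) {g : α → γ} (hg : Function.Injective g) :
    IsSubmodular fun s : Finset α => V (s.image g) := fun A B => by
  simpa only [image_inter _ _ hg, image_union] using hV (A.image g) (B.image g)

section MarginalGain

variable {ι β : Type*} [LinearOrder ι] [LocallyFiniteOrderBot ι] [AddCommGroup β]

def marginalGain (W : Finset ι → β) (i : ι) : β := W (Iic i) - W (Iio i)

theorem sum_marginalGain_of_isLowerSet {W : Finset ι → β} (hW0 : W ∅ = 0) {s : Finset ι}
    (hs : IsLowerSet (s : Set ι)) : ∑ i ∈ s, marginalGain W i = W s := by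
  induction s using Finset.induction_on_max with
  | empty => simp [hW0]
  | insert a t hlt ih =>
    have hat : a ∉ t := fun h => lt_irrefl a (hlt a h)
    have ht : t = Iio a := by
      ext y
      refine ⟨fun hy => mem_Iio.2 (hlt y hy), fun hy => ?_⟩
      have := hs (le_of_lt (mem_Iio.1 hy)) (by simp)
      simpa [(mem_Iio.1 hy).ne] using this
    have htl : IsLowerSet (t : Set ι) := by
      rw [ht, coe_Iio]; exact isLowerSet_Iio a
    rw [sum_insert hat, ih htl, ht, Iio_insert, marginalGain, sub_add_cancel]

variable [PartialOrder β] [IsOrderedAddMonoid β]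

theorem sum_marginalGain_le {W : Finset ι → β} (hW : IsSubmodular W) (hW0 : W ∅ = 0)
    (s : Finset ι) : ∑ i ∈ s, marginalGain W i ≤ W s := by
  induction s using Finset.induction_on_max with
  | empty => simp [hW0]
  | insert a t hlt ih =>
    have hat : a ∉ t := fun h => lt_irrefl a (hlt a h)
    have hinter : insert a t ∩ Iio a = t := by
      rw [insert_inter_of_notMem (by simp), inter_eq_left.2 (fun y hy => mem_Iio.2 (hlt y hy))]
    have hunion : insert a t ∪ Iio a = Iic a := by
      rw [insert_union, union_eq_right.2 (fun y hy => mem_Iio.2 (hlt y hy)), Iio_insert]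
    have hsub := hW (insert a t) (Iio a)
    rw [hinter, hunion] at hsub
    rw [sum_insert hat, marginalGain]
    calc W (Iic a) - W (Iio a) + ∑ i ∈ t, marginalGain W i
        ≤ W (Iic a) - W (Iio a) + W t := add_le_add_right ih _
      _ ≤ W (insert a t) := by
        rw [sub_add_eq_add_sub, sub_le_iff_le_add]; rwa [add_comm] at hsub

end MarginalGain

theorem greedy_in_base_polytope_general (Y : Type*) [Fintype Y] [DecidableEq Y]
    (V : Finset Y → ℝ) (hV0 : V ∅ = 0)
    (hsub : ∀ A B : Finset Y, V (A ∩ B) + V (A ∪ B) ≤ V A + V B)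
    (k : ℕ) (e : Fin k ≃ Y)
    (μ : Y → ℝ)
    (hμ : ∀ i : Fin k,
      μ (e i) = V ((Finset.univ.filter (fun j : Fin k => j ≤ i)).image e)
        - V ((Finset.univ.filter (fun j : Fin k => j < i)).image e)) :
    (∑ y : Y, μ y) = V Finset.univ ∧ ∀ A : Finset Y, (∑ y ∈ A, μ y) ≤ V A := by
  set W : Finset (Fin k) → ℝ := fun s => V (s.image e)
  have hW : IsSubmodular W := IsSubmodular.comp_image hsub e.injective
  have hW0 : W ∅ = 0 := by simp [W, hV0]
  have hμW (i : Fin k) : μ (e i) = marginalGain W i := by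
    rw [hμ i, filter_ge_eq_Iic, filter_gt_eq_Iio]; rfl
  have hsum (A : Finset Y) : ∑ y ∈ A, μ y = ∑ i ∈ A.image e.symm, marginalGain W i := by
    rw [sum_image (e.symm.injective.injOn)]
    simp [← hμW]
  have hWV (A : Finset Y) : W (A.image e.symm) = V A := by
    simp [W, image_image]
  refine ⟨?_, fun A => ?_⟩
  · rw [hsum, image_univ_equiv, sum_marginalGain_of_isLowerSet hW0 (by simp [isLowerSet_univ]),
      ← hWV, image_univ_equiv]
  · rw [hsum, ← hWV]
    exact sum_marginalGain_le hW hW0 _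

/-- Greedy algorithm optimality: for a submodular `V` with `V ∅ = 0` and `f` sorted
in decreasing order along an enumeration `e : Fin k ≃ Y`, the vector of successive
marginal gains `μ (e i) = V({e 0,…,e i}) − V({e 0,…,e (i-1)})` lies in the base
polytope `B(V)`. -/
theorem greedy_in_base_polytope (Y : Type*) [Fintype Y] [DecidableEq Y]
    (V : Finset Y → ℝ) (hV0 : V ∅ = 0)
    (hsub : ∀ A B : Finset Y, V (A ∩ B) + V (A ∪ B) ≤ V A + V B)
    (k : ℕ) (e : Fin k ≃ Y) (f : Y → ℝ)
    (hsorted : StrictAnti (fun i : Fin k => f (e i)))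
    (μ : Y → ℝ)
    (hμ : ∀ i : Fin k,
      μ (e i) = V ((Finset.univ.filter (fun j : Fin k => j ≤ i)).image e)
        - V ((Finset.univ.filter (fun j : Fin k => j < i)).image e)) :
    (∑ y : Y, μ y) = V Finset.univ ∧ ∀ A : Finset Y, (∑ y ∈ A, μ y) ≤ V A :=
  greedy_in_base_polytope_general Y V hV0 hsub k e μ hμ
end

section
/- For a submodular set function V on a finite set Y with V(∅) = 0, the Lovász extension equals the support function of the base polytope: v(f) = max_{μ ∈ B(V)} ∑_{y∈Y} f(y) μ({y}) for all f : Y → ℝ. -/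
open MeasureTheory Finset

open MeasureTheory Finset

lemma indIoi (c a : ℝ) :
    (fun t => if t ≤ c then a else 0) = (Set.Iic c).indicator (fun _ => a) := by
  funext t; simp [Set.indicator_apply]

lemma indIio (c a : ℝ) :
    (fun t : ℝ => (if t ≤ c then a else 0) - a) = fun t => -((Set.Ioi c).indicator (fun _ => a) t) := by
  funext t
  by_cases h : t ≤ c
  · simp [Set.indicator_apply, h, not_lt.2 h]
  · simp [Set.indicator_apply, h, lt_of_not_ge h]

lemma intOn_Ioi (c a : ℝ) : IntegrableOn (fun t => if t ≤ c then a else 0) (Set.Ioi 0) := by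
  rw [indIoi]
  rw [IntegrableOn, integrable_indicator_iff measurableSet_Iic]
  have : IntegrableOn (fun _ : ℝ => a) (Set.Iic c ∩ Set.Ioi 0) := by
    rw [Set.inter_comm, Set.Ioi_inter_Iic]
    exact integrableOn_const measure_Ioc_lt_top.ne
  simpa [IntegrableOn, Measure.restrict_restrict measurableSet_Iic] using this

lemma intOn_Iio (c a : ℝ) : IntegrableOn (fun t : ℝ => (if t ≤ c then a else 0) - a) (Set.Iio 0) := by
  have H : IntegrableOn (fun t : ℝ => (Set.Ioi c).indicator (fun _ => a) t) (Set.Iio 0) := by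
    rw [IntegrableOn, integrable_indicator_iff measurableSet_Ioi]
    have : IntegrableOn (fun _ : ℝ => a) (Set.Ioi c ∩ Set.Iio 0) := by
      rw [Set.Ioi_inter_Iio]
      exact integrableOn_const measure_Ioo_lt_top.ne
    simpa [IntegrableOn, Measure.restrict_restrict measurableSet_Ioi] using this
  rw [indIio]
  exact H.neg

lemma intval_Ioi (c a : ℝ) :
    (∫ t in Set.Ioi (0:ℝ), (if t ≤ c then a else 0)) = max c 0 * a := by
  rw [indIoi, setIntegral_indicator measurableSet_Iic, Set.Ioi_inter_Iic,
    setIntegral_const, Real.volume_real_Ioc, smul_eq_mul, sub_zero]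

lemma intval_Iio (c a : ℝ) :
    (∫ t in Set.Iio (0:ℝ), ((if t ≤ c then a else 0) - a)) = min c 0 * a := by
  rw [indIio]
  rw [integral_neg, setIntegral_indicator measurableSet_Ioi, Set.Iio_inter_Ioi,
    setIntegral_const, Real.volume_real_Ioo, smul_eq_mul, zero_sub]
  have : max (-c) 0 = -min c 0 := by rw [min_comm, ← max_neg_neg, neg_zero, max_comm]
  rw [this]; ring

lemma key_sum {Y : Type*} [Fintype Y] (f ν : Y → ℝ) :
    (∫ t in Set.Ioi (0:ℝ), ∑ y : Y, (if t ≤ f y then ν y else 0))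
    + (∫ t in Set.Iio (0:ℝ), ∑ y : Y, ((if t ≤ f y then ν y else 0) - ν y))
    = ∑ y : Y, f y * ν y := by
  rw [integral_finset_sum _ (fun y _ => intOn_Ioi (f y) (ν y)),
    integral_finset_sum _ (fun y _ => intOn_Iio (f y) (ν y)), ← Finset.sum_add_distrib]
  refine Finset.sum_congr rfl fun y _ => ?_
  rw [intval_Ioi, intval_Iio, ← add_mul, max_add_min]; ring

lemma fin_downward {n : ℕ} (D : Finset (Fin n))
    (hD : ∀ i j : Fin n, i ≤ j → j ∈ D → i ∈ D) :
    D = univ.filter fun i : Fin n => (i : ℕ) < D.card := by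
  ext i
  simp only [mem_filter, mem_univ, true_and]
  constructor
  · intro hi
    have hsub : Finset.Iic i ⊆ D := fun j hj => hD j i (mem_Iic.1 hj) hi
    have := Finset.card_le_card hsub
    rw [Fin.card_Iic] at this
    omega
  · intro hi
    by_contra hmem
    have hsub : D ⊆ Finset.Iio i := by
      intro j hj
      rw [mem_Iio]
      by_contra hji
      exact hmem (hD i j (le_of_not_gt hji) hj)
    have := Finset.card_le_card hsub
    rw [Fin.card_Iio] at this
    omega

section greedy

set_option linter.unusedSectionVars false

variable {Y : Type*} [Fintype Y] [DecidableEq Y] {n : ℕ}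

/-- prefix set of the first `k` elements under the ordering `e` -/
def pref (e : Fin n ≃ Y) (k : ℕ) : Finset Y :=
  (univ.filter fun i : Fin n => (i : ℕ) < k).image e

lemma mem_pref {e : Fin n ≃ Y} {k : ℕ} {y : Y} :
    y ∈ pref e k ↔ ((e.symm y : Fin n) : ℕ) < k := by
  simp only [pref, mem_image, mem_filter, mem_univ, true_and]
  constructor
  · rintro ⟨i, hi, rfl⟩; simpa using hi
  · intro h; exact ⟨e.symm y, h, e.apply_symm_apply y⟩

lemma pref_zero (e : Fin n ≃ Y) : pref e 0 = ∅ := by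
  ext y; simp [mem_pref]

lemma pref_univ (e : Fin n ≃ Y) {k : ℕ} (hk : n ≤ k) : pref e k = univ := by
  ext y; simpa [mem_pref] using lt_of_lt_of_le (e.symm y).isLt hk

lemma pref_succ (e : Fin n ≃ Y) {k : ℕ} (hk : k < n) :
    pref e (k + 1) = insert (e ⟨k, hk⟩) (pref e k) := by
  ext y
  simp only [mem_insert, mem_pref]
  constructor
  · intro h
    rcases eq_or_lt_of_le (Nat.lt_succ_iff.1 h) with h' | h'
    · left
      have he : e.symm y = ⟨k, hk⟩ := Fin.ext h'
      rw [← he, e.apply_symm_apply]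
    · right; exact h'
  · rintro (rfl | h)
    · simp
    · omega

lemma not_mem_pref_self (e : Fin n ≃ Y) {k : ℕ} (hk : k < n) :
    e ⟨k, hk⟩ ∉ pref e k := by
  simp [mem_pref]

/-- the greedy vertex of the base polytope -/
def greedy (V : Finset Y → ℝ) (e : Fin n ≃ Y) (y : Y) : ℝ :=
  V (pref e ((e.symm y : ℕ) + 1)) - V (pref e (e.symm y))

lemma greedy_apply (V : Finset Y → ℝ) (e : Fin n ≃ Y) {k : ℕ} (hk : k < n) :
    greedy V e (e ⟨k, hk⟩) = V (pref e (k + 1)) - V (pref e k) := by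
  simp [greedy]

lemma sum_greedy_pref (V : Finset Y → ℝ) (hV0 : V ∅ = 0) (e : Fin n ≃ Y) (k : ℕ) :
    ∑ y ∈ pref e k, greedy V e y = V (pref e k) := by
  induction k with
  | zero => simp [pref_zero, hV0]
  | succ k ih =>
    by_cases hk : k < n
    · rw [pref_succ e hk, Finset.sum_insert (not_mem_pref_self e hk), ih,
        greedy_apply V e hk, ← pref_succ e hk]
      ring
    · have h1 : pref e (k+1) = pref e k := by
        rw [pref_univ e (le_of_not_gt hk), pref_univ e (by omega)]
      rw [h1, ih]

lemma sum_greedy_le (V : Finset Y → ℝ) (hV0 : V ∅ = 0)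
    (hsub : ∀ A B : Finset Y, V (A ∩ B) + V (A ∪ B) ≤ V A + V B)
    (e : Fin n ≃ Y) (A : Finset Y) :
    ∑ y ∈ A, greedy V e y ≤ V A := by
  have key : ∀ k, ∑ y ∈ A ∩ pref e k, greedy V e y ≤ V (A ∩ pref e k) := by
    intro k
    induction k with
    | zero => simp [pref_zero, hV0]
    | succ k ih =>
      by_cases hk : k < n
      · set x := e ⟨k, hk⟩ with hx
        by_cases hxA : x ∈ A
        · have hins : A ∩ pref e (k+1) = insert x (A ∩ pref e k) := by
            rw [pref_succ e hk, Finset.inter_insert_of_mem hxA]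
          have hxnot : x ∉ A ∩ pref e k := fun h =>
            not_mem_pref_self e hk (Finset.mem_inter.1 h).2
          rw [hins, Finset.sum_insert hxnot]
          have hgx : greedy V e x = V (pref e (k+1)) - V (pref e k) := greedy_apply V e hk
          have hmod := hsub (insert x (A ∩ pref e k)) (pref e k)
          have h1 : insert x (A ∩ pref e k) ∩ pref e k = A ∩ pref e k := by
            ext z
            simp only [mem_inter, mem_insert]
            constructor
            · rintro ⟨(rfl | hz), hz2⟩
              · exact absurd hz2 (not_mem_pref_self e hk)
              · exact ⟨hz.1, hz.2⟩
            · intro hz; exact ⟨Or.inr ⟨hz.1, hz.2⟩, hz.2⟩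
          have h2 : insert x (A ∩ pref e k) ∪ pref e k = pref e (k+1) := by
            rw [pref_succ e hk, Finset.insert_union]
            congr 1
            exact Finset.union_eq_right.2 (Finset.inter_subset_right)
          rw [h1, h2] at hmod
          rw [← hins]
          calc greedy V e x + ∑ y ∈ A ∩ pref e k, greedy V e y
              ≤ greedy V e x + V (A ∩ pref e k) := by linarith
            _ ≤ V (insert x (A ∩ pref e k)) := by rw [hgx]; linarith
            _ = V (A ∩ pref e (k+1)) := by rw [hins]
        · have : A ∩ pref e (k+1) = A ∩ pref e k := by
            rw [pref_succ e hk, Finset.inter_insert_of_notMem hxA]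
          rw [this]; exact ih
      · have h1 : pref e (k+1) = pref e k := by
          rw [pref_univ e (le_of_not_gt hk), pref_univ e (by omega)]
        rw [h1]; exact ih
  have := key n
  rwa [pref_univ e le_rfl, Finset.inter_univ] at this

end greedy

section main

set_option linter.unusedSectionVars false

variable {Y : Type*} [Fintype Y] [DecidableEq Y] {n : ℕ}

lemma filter_eq_pref (f : Y → ℝ) (e : Fin n ≃ Y)
    (hanti : Antitone fun i => f (e i)) (t : ℝ) :
    univ.filter (fun y => t ≤ f y)
      = pref e (univ.filter fun i : Fin n => t ≤ f (e i)).card := by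
  set D := univ.filter fun i : Fin n => t ≤ f (e i) with hD
  have hdc : ∀ i j : Fin n, i ≤ j → j ∈ D → i ∈ D := by
    intro i j hij hj
    simp only [hD, mem_filter, mem_univ, true_and] at hj ⊢
    exact le_trans hj (hanti hij)
  have hDeq := fin_downward D hdc
  ext y
  simp only [mem_filter, mem_univ, true_and, mem_pref]
  have : (e.symm y ∈ D) ↔ t ≤ f y := by
    simp [hD, e.apply_symm_apply]
  rw [← this]
  conv_lhs => rw [hDeq]
  simp

lemma pointwise_greedy (V : Finset Y → ℝ) (hV0 : V ∅ = 0) (f : Y → ℝ) (e : Fin n ≃ Y)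
    (hanti : Antitone fun i => f (e i)) (t : ℝ) :
    V (univ.filter fun y => t ≤ f y)
      = ∑ y : Y, (if t ≤ f y then greedy V e y else 0) := by
  rw [← Finset.sum_filter, filter_eq_pref f e hanti t, sum_greedy_pref V hV0]

end main

/-- The Lovász extension of a submodular function equals the support function of
the base polytope: `v(f)` is the maximum of `∑ y, f y * μ y` over `μ ∈ B(V)`. -/
theorem lovasz_eq_support_function (Y : Type*) [Fintype Y] [DecidableEq Y]
    (V : Finset Y → ℝ) (hV0 : V ∅ = 0)
    (hsub : ∀ A B : Finset Y, V (A ∩ B) + V (A ∪ B) ≤ V A + V B)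
    (f : Y → ℝ) :
    IsGreatest
      {s : ℝ | ∃ μ : Y → ℝ, (∑ y : Y, μ y) = V Finset.univ ∧
        (∀ A : Finset Y, (∑ y ∈ A, μ y) ≤ V A) ∧ s = ∑ y : Y, f y * μ y}
      (lovasz V f) := by
  -- set up the sorted ordering
  set n := Fintype.card Y with hn
  set e₀ : Fin n ≃ Y := (Fintype.equivFin Y).symm with he₀
  set σ := Tuple.sort (fun i => -f (e₀ i)) with hσ
  set e : Fin n ≃ Y := σ.trans e₀ with he
  have hanti : Antitone fun i => f (e i) := by
    intro i j hij
    have := Tuple.monotone_sort (fun i => -f (e₀ i)) hij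
    simpa [he, Equiv.trans_apply] using this
  have hνsum : (∑ y : Y, greedy V e y) = V Finset.univ := by
    have h1 : (univ : Finset Y) = pref e n := (pref_univ e le_rfl).symm
    calc (∑ y : Y, greedy V e y) = ∑ y ∈ pref e n, greedy V e y := by rw [← h1]
      _ = V (pref e n) := sum_greedy_pref V hV0 e n
      _ = V univ := by rw [← h1]
  have hpt := pointwise_greedy V hV0 f e hanti
  have hlov : lovasz V f = ∑ y : Y, f y * greedy V e y := by
    rw [lovasz]
    simp only [hpt]
    have h2 : ∀ t : ℝ, (∑ y : Y, (if t ≤ f y then greedy V e y else 0)) - V univ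
        = ∑ y : Y, ((if t ≤ f y then greedy V e y else 0) - greedy V e y) := by
      intro t
      rw [Finset.sum_sub_distrib, hνsum]
    simp only [h2]
    exact key_sum f (greedy V e)
  constructor
  · exact ⟨greedy V e, hνsum, sum_greedy_le V hV0 hsub e, hlov⟩
  · rintro s ⟨μ, hμsum, hμle, rfl⟩
    rw [← key_sum f μ, hlov, ← key_sum f (greedy V e)]
    have hInt1 : ∀ (ρ : Y → ℝ), Integrable (fun t => ∑ y : Y, (if t ≤ f y then ρ y else 0))
        (volume.restrict (Set.Ioi (0:ℝ))) :=
      fun ρ => integrable_finset_sum _ (fun y _ => intOn_Ioi (f y) (ρ y))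
    have hInt2 : ∀ (ρ : Y → ℝ), Integrable (fun t => ∑ y : Y, ((if t ≤ f y then ρ y else 0) - ρ y))
        (volume.restrict (Set.Iio (0:ℝ))) :=
      fun ρ => integrable_finset_sum _ (fun y _ => intOn_Iio (f y) (ρ y))
    have hle1 : ∀ t : ℝ, (∑ y : Y, (if t ≤ f y then μ y else 0))
        ≤ ∑ y : Y, (if t ≤ f y then greedy V e y else 0) := by
      intro t
      rw [← hpt t, ← Finset.sum_filter]
      exact hμle _
    have hle2 : ∀ t : ℝ, (∑ y : Y, ((if t ≤ f y then μ y else 0) - μ y))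
        ≤ ∑ y : Y, ((if t ≤ f y then greedy V e y else 0) - greedy V e y) := by
      intro t
      rw [Finset.sum_sub_distrib, Finset.sum_sub_distrib, hμsum, hνsum]
      exact sub_le_sub_right (hle1 t) _
    exact add_le_add (integral_mono (hInt1 μ) (hInt1 (greedy V e)) hle1)
      (integral_mono (hInt2 μ) (hInt2 (greedy V e)) hle2)
end

section
/- Monotonicity of minimizers: let V be submodular on a finite set Y and p : Y → ℝ₊. For λ ≥ 0, let B_λ be the (inclusion-wise largest) minimizer of B ↦ V(B) + λ p(Bᶜ) over subsets of Y, where p(A) = ∑_{y∈A} p(y). Then λ ≤ λ' implies B_λ ⊆ B_{λ'}. -/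
/-!
Write `f_λ C = V C + λ m C` with `m C = p(Cᶜ)`, a modular function that is antitone because `p ≥ 0`.
If `B` minimizes `f_λ`, comparing `B` with `B ∩ B'` and using submodularity of `V` and modularity
of `m` gives `V (B ∪ B') - V B' ≤ λ (m B' - m (B ∪ B'))`. The bracket is nonnegative, so `λ` may be
raised to `λ'`: then `f_λ' (B ∪ B') ≤ f_λ' B'`, so `B ∪ B'` minimizes `f_λ'` and is contained in
its largest minimizer `B'`.
-/

open Finset

section Lattice

variable {α : Type*} [Lattice α]

theorem sup_le_of_minimizer_of_le {V m : α → ℝ}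
    (hV : ∀ a b, V (a ⊓ b) + V (a ⊔ b) ≤ V a + V b)
    (hm : ∀ a b, m (a ⊓ b) + m (a ⊔ b) = m a + m b) (hm_anti : Antitone m)
    {lam lam' : ℝ} (hlam : lam ≤ lam') {b : α} (hb : ∀ c, V b + lam * m b ≤ V c + lam * m c)
    (b' : α) : V (b ⊔ b') + lam' * m (b ⊔ b') ≤ V b' + lam' * m b' := by
  have hb_inf := hb (b ⊓ b')
  have hV_bb' := hV b b'
  have hscale : lam * (m b' - m (b ⊔ b')) ≤ lam' * (m b' - m (b ⊔ b')) :=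
    mul_le_mul_of_nonneg_right hlam (sub_nonneg.mpr (hm_anti le_sup_right))
  linear_combination hb_inf + hV_bb' + lam * hm b b' + hscale

end Lattice

namespace Finset

variable {Y : Type*} [Fintype Y] [DecidableEq Y]

theorem sum_compl_inter_add_sum_compl_union (p : Y → ℝ) (A B : Finset Y) :
    ∑ y ∈ (A ∩ B)ᶜ, p y + ∑ y ∈ (A ∪ B)ᶜ, p y = ∑ y ∈ Aᶜ, p y + ∑ y ∈ Bᶜ, p y := by
  rw [compl_inter, compl_union]
  exact sum_union_inter

theorem antitone_sum_compl {p : Y → ℝ} (hp : ∀ y, 0 ≤ p y) :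
    Antitone fun C : Finset Y => ∑ y ∈ Cᶜ, p y := fun _ _ hAB =>
  sum_le_sum_of_subset_of_nonneg (compl_subset_compl.mpr hAB) fun y _ _ => hp y

end Finset

theorem minimizers_monotone_general (Y : Type*) [Fintype Y] [DecidableEq Y]
    (V : Finset Y → ℝ)
    (hsub : ∀ A B : Finset Y, V (A ∩ B) + V (A ∪ B) ≤ V A + V B)
    (p : Y → ℝ) (hp : ∀ y, 0 ≤ p y)
    (lam lam' : ℝ) (hlam' : lam ≤ lam')
    (B B' : Finset Y)
    (hBmin : ∀ C : Finset Y, V B + lam * (∑ y ∈ Bᶜ, p y) ≤ V C + lam * (∑ y ∈ Cᶜ, p y))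
    (hB'min : ∀ C : Finset Y,
      V B' + lam' * (∑ y ∈ B'ᶜ, p y) ≤ V C + lam' * (∑ y ∈ Cᶜ, p y))
    (hB'max : ∀ C : Finset Y,
      (∀ D : Finset Y, V C + lam' * (∑ y ∈ Cᶜ, p y) ≤ V D + lam' * (∑ y ∈ Dᶜ, p y)) → C ⊆ B') :
    B ⊆ B' := by
  have hunion_le := sup_le_of_minimizer_of_le hsub (sum_compl_inter_add_sum_compl_union p)
    (antitone_sum_compl hp) hlam' hBmin B'
  exact subset_union_left.trans (hB'max _ fun D => hunion_le.trans (hB'min D))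

/-- Monotonicity of minimizers: for `V` submodular and `p ≥ 0`, if `B` (resp. `B'`)
is the inclusion-wise largest minimizer of `C ↦ V C + λ p(Cᶜ)` for `λ` (resp. `λ'`),
and `λ ≤ λ'`, then `B ⊆ B'`. -/
theorem minimizers_monotone (Y : Type*) [Fintype Y] [DecidableEq Y]
    (V : Finset Y → ℝ)
    (hsub : ∀ A B : Finset Y, V (A ∩ B) + V (A ∪ B) ≤ V A + V B)
    (p : Y → ℝ) (hp : ∀ y, 0 ≤ p y)
    (lam lam' : ℝ) (hlam : 0 ≤ lam) (hlam' : lam ≤ lam')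
    (B B' : Finset Y)
    (hBmin : ∀ C : Finset Y, V B + lam * (∑ y ∈ Bᶜ, p y) ≤ V C + lam * (∑ y ∈ Cᶜ, p y))
    (hBmax : ∀ C : Finset Y,
      (∀ D : Finset Y, V C + lam * (∑ y ∈ Cᶜ, p y) ≤ V D + lam * (∑ y ∈ Dᶜ, p y)) → C ⊆ B)
    (hB'min : ∀ C : Finset Y,
      V B' + lam' * (∑ y ∈ B'ᶜ, p y) ≤ V C + lam' * (∑ y ∈ Cᶜ, p y))
    (hB'max : ∀ C : Finset Y,
      (∀ D : Finset Y, V C + lam' * (∑ y ∈ Cᶜ, p y) ≤ V D + lam' * (∑ y ∈ Dᶜ, p y)) → C ⊆ B') :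
    B ⊆ B' :=
  minimizers_monotone_general Y V hsub p hp lam lam' hlam' B B' hBmin hB'min hB'max
end

section
/- The Lovász extension of a set-cover function V(A) = M(⋃_{y∈A} S(y)) on a finite set Y is v(f) = ∑_{z∈Z} m(z) · max{ f(y) : y ∈ Y, z ∈ S(y) }, for any f : Y → ℝ, assuming ⋃_{y∈Y} S(y) = Z. -/
open MeasureTheory Finset

lemma lovasz_aux_intgr1 (a C : ℝ) :
    IntegrableOn (fun t : ℝ => if t ≤ a then C else 0) (Set.Ioi 0) := by
  have h : (fun t : ℝ => if t ≤ a then C else 0) = (Set.Iic a).indicator (fun _ => C) := by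
    ext t; simp [Set.indicator_apply]
  rw [h, IntegrableOn, integrable_indicator_iff measurableSet_Iic, IntegrableOn,
    Measure.restrict_restrict measurableSet_Iic]
  refine (integrableOn_const_iff).mpr (Or.inr ?_)
  have hs : Set.Iic a ∩ Set.Ioi 0 ⊆ Set.Ioc 0 a := fun t ht => ⟨ht.2, ht.1⟩
  exact lt_of_le_of_lt (measure_mono hs) (by rw [Real.volume_Ioc]; exact ENNReal.ofReal_lt_top)

lemma lovasz_aux_intgr2 (a C : ℝ) :
    IntegrableOn (fun t : ℝ => (if t ≤ a then C else 0) - C) (Set.Iio 0) := by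
  have h : (fun t : ℝ => (if t ≤ a then C else 0) - C)
      = fun t => -((Set.Ioi a).indicator (fun _ => C) t) := by
    ext t; by_cases ht : t ≤ a
    · simp [Set.indicator_apply, ht, not_lt.mpr ht]
    · simp [Set.indicator_apply, ht, lt_of_not_ge ht]
  rw [h]
  refine Integrable.neg ?_
  rw [integrable_indicator_iff measurableSet_Ioi, IntegrableOn,
    Measure.restrict_restrict measurableSet_Ioi]
  refine (integrableOn_const_iff).mpr (Or.inr ?_)
  have hs : Set.Ioi a ∩ Set.Iio 0 ⊆ Set.Ioo a 0 := fun t ht => ⟨ht.1, ht.2⟩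
  exact lt_of_le_of_lt (measure_mono hs) (by rw [Real.volume_Ioo]; exact ENNReal.ofReal_lt_top)

lemma lovasz_aux_int1 (a C : ℝ) :
    (∫ t in Set.Ioi (0:ℝ), (if t ≤ a then C else 0)) = C * max a 0 := by
  have h : (fun t : ℝ => if t ≤ a then C else 0) = (Set.Iic a).indicator (fun _ => C) := by
    ext t; simp [Set.indicator_apply]
  rw [h, setIntegral_indicator measurableSet_Iic, Set.Ioi_inter_Iic, setIntegral_const,
    Real.volume_real_Ioc, smul_eq_mul, mul_comm]
  ring_nf

lemma lovasz_aux_int2 (a C : ℝ) :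
    (∫ t in Set.Iio (0:ℝ), ((if t ≤ a then C else 0) - C)) = -(C * max (-a) 0) := by
  have h : (fun t : ℝ => (if t ≤ a then C else 0) - C)
      = fun t => -((Set.Ioi a).indicator (fun _ => C) t) := by
    ext t; by_cases ht : t ≤ a
    · simp [Set.indicator_apply, ht, not_lt.mpr ht]
    · simp [Set.indicator_apply, ht, lt_of_not_ge ht]
  rw [h, integral_neg, setIntegral_indicator measurableSet_Ioi, Set.Iio_inter_Ioi,
    setIntegral_const, Real.volume_real_Ioo, smul_eq_mul, mul_comm]
  ring_nf

lemma lovasz_set_cover_aux (Y Z : Type*) [Fintype Y] [Fintype Z]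
    [DecidableEq Y] [DecidableEq Z]
    (S : Y → Finset Z) (m : Z → ℝ)
    (hcov : ∀ z : Z, ∃ y : Y, z ∈ S y) (f : Y → ℝ) (c : Z → ℝ)
    (hch : ∀ (t : ℝ) (z : Z), t ≤ c z ↔ ∃ y, t ≤ f y ∧ z ∈ S y) :
    lovasz (fun A => ∑ z ∈ A.biUnion S, m z) f = ∑ z : Z, m z * c z := by
  classical
  have key : ∀ t : ℝ, (∑ z ∈ (Finset.univ.filter (fun y => t ≤ f y)).biUnion S, m z)
      = ∑ z : Z, if t ≤ c z then m z else 0 := by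
    intro t
    have hset : (Finset.univ.filter (fun y => t ≤ f y)).biUnion S
        = Finset.univ.filter (fun z => t ≤ c z) := by
      ext z
      simp only [Finset.mem_biUnion, Finset.mem_filter, Finset.mem_univ, true_and, hch]
    rw [hset, Finset.sum_filter]
  have huniv : (∑ z ∈ (Finset.univ : Finset Y).biUnion S, m z) = ∑ z : Z, m z := by
    congr 1
    ext z
    simpa using hcov z
  simp only [lovasz, key, huniv]
  have h2 : ∀ t : ℝ, ((∑ z : Z, if t ≤ c z then m z else 0) - ∑ z : Z, m z)
      = ∑ z : Z, ((if t ≤ c z then m z else 0) - m z) := fun t => by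
    rw [Finset.sum_sub_distrib]
  simp only [h2]
  rw [MeasureTheory.integral_finset_sum _ (fun z _ => lovasz_aux_intgr1 (c z) (m z)),
    MeasureTheory.integral_finset_sum _ (fun z _ => lovasz_aux_intgr2 (c z) (m z)),
    ← Finset.sum_add_distrib]
  refine Finset.sum_congr rfl fun z _ => ?_
  rw [lovasz_aux_int1, lovasz_aux_int2]
  rcases le_total 0 (c z) with h | h
  · rw [max_eq_left h, max_eq_right (neg_nonpos.mpr h)]; ring
  · rw [max_eq_right h, max_eq_left (neg_nonneg.mpr h)]; ring

/-- The Lovász extension of a set-cover function `V A = M(⋃_{y∈A} S y)` (where the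
sets `S y` cover `Z`) is `v(f) = ∑ z, m z * max{ f y : z ∈ S y }`. -/
theorem lovasz_set_cover (Y Z : Type*) [Fintype Y] [Fintype Z]
    [DecidableEq Y] [DecidableEq Z]
    (S : Y → Finset Z) (m : Z → ℝ) (hm : ∀ z, 0 ≤ m z)
    (hcov : ∀ z : Z, ∃ y : Y, z ∈ S y) (f : Y → ℝ) :
    lovasz (fun A => ∑ z ∈ A.biUnion S, m z) f =
      ∑ z : Z, m z *
        (Finset.univ.filter (fun y : Y => z ∈ S y)).sup'
          (by obtain ⟨y, hy⟩ := hcov z; exact ⟨y, by simp [hy]⟩) f := by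
  classical
  have hne : ∀ z : Z, (Finset.univ.filter (fun y : Y => z ∈ S y)).Nonempty := fun z => by
    obtain ⟨y, hy⟩ := hcov z; exact ⟨y, by simp [hy]⟩
  refine lovasz_set_cover_aux Y Z S m hcov f
    (fun z => (Finset.univ.filter (fun y : Y => z ∈ S y)).sup' (hne z) f) ?_
  intro t z
  rw [Finset.le_sup'_iff]
  simp only [Finset.mem_filter, Finset.mem_univ, true_and]
  tauto
end
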